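/- arXiv:hep-th/0508035 — 2 statements merged into one kernel-verified Lean document; each statement's English description precedes it below -/
import Mathlib

section
/- If G : ℝ^N → ℝ⁵ (components G_μ, μ = 0,…,4) is smooth and for every smooth map Φ : ℝ⁵ → ℝ^N the curl of the composite vanishes identically, i.e. ∂_ν(G_μ ∘ Φ)(x) − ∂_μ(G_ν ∘ Φ)(x) = 0 for all x ∈ ℝ⁵ and all μ, ν ∈ {0,…,4}, then G is a constant map. -/
noncomputable section

/-- Partial derivative `∂_μ f` of a scalar function on `ℝ⁵`. -/
noncomputable def pd (μ : Fin 5) (f : (Fin 5 → ℝ) → ℝ) (x : Fin 5 → ℝ) : ℝ :=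
  fderiv ℝ f x (Pi.single μ 1)

/-- if `G : ℝᴺ → ℝ⁵` is smooth and for every smooth `Φ : ℝ⁵ → ℝᴺ` the
curl of `G ∘ Φ` vanishes identically, then `G` is constant. -/
theorem curl_free_for_all_fields_implies_constant
    (N : ℕ) (hN : 1 ≤ N) (G : (Fin N → ℝ) → Fin 5 → ℝ)
    (hG : ContDiff ℝ (⊤ : ℕ∞) G)
    (h : ∀ Φ : (Fin 5 → ℝ) → Fin N → ℝ, ContDiff ℝ (⊤ : ℕ∞) Φ →
      ∀ (x : Fin 5 → ℝ) (μ ν : Fin 5),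
        pd ν (fun y => G (Φ y) μ) x - pd μ (fun y => G (Φ y) ν) x = 0) :
    ∀ u v : Fin N → ℝ, G u = G v := by
  have hGd : Differentiable ℝ G := hG.differentiable (by simp)
  have hGμd : ∀ μ : Fin 5, Differentiable ℝ (fun q => G q μ) := fun μ =>
    ((ContinuousLinearMap.proj (R := ℝ) (φ := fun _ : Fin 5 => ℝ) μ).differentiable).comp hGd
  have key : ∀ (p w : Fin N → ℝ) (μ : Fin 5),
      fderiv ℝ (fun q => G q μ) p w = 0 := by
    intro p w μ
    obtain ⟨ν, hνμ⟩ : ∃ ν : Fin 5, ν ≠ μ := by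
      rcases Decidable.eq_or_ne μ 0 with h0 | h0
      · exact ⟨1, by simp [h0]⟩
      · exact ⟨0, Ne.symm h0⟩
    set L : (Fin 5 → ℝ) →L[ℝ] (Fin N → ℝ) :=
      (ContinuousLinearMap.proj (R := ℝ) (φ := fun _ : Fin 5 => ℝ) ν).smulRight w with hL
    set Φ : (Fin 5 → ℝ) → Fin N → ℝ := fun y => p + L y with hΦdef
    have hΦ : ContDiff ℝ (⊤ : ℕ∞) Φ := contDiff_const.add L.contDiff
    have hΦfd : ∀ x, fderiv ℝ Φ x = L := fun x =>
      ((L.hasFDerivAt (x := x)).const_add p).fderiv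
    have hΦd : Differentiable ℝ Φ := fun x =>
      (((L.hasFDerivAt (x := x)).const_add p)).differentiableAt
    have hΦ0 : Φ 0 = p := by simp [hΦdef]
    have hcomp : ∀ (κ : Fin 5) (e : Fin 5 → ℝ),
        fderiv ℝ (fun y => G (Φ y) κ) 0 e = fderiv ℝ (fun q => G q κ) p (L e) := by
      intro κ e
      have : fderiv ℝ ((fun q => G q κ) ∘ Φ) 0
          = (fderiv ℝ (fun q => G q κ) (Φ 0)).comp (fderiv ℝ Φ 0) :=
        fderiv_comp 0 ((hGμd κ) (Φ 0)) (hΦd 0)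
      have h2 := congrArg (fun T => T e) this
      simpa [Function.comp, Function.comp_def, hΦfd, hΦ0] using h2
    have hc := h Φ hΦ 0 μ ν
    have hLν : L (Pi.single ν 1) = w := by
      simp [hL]
    have hLμ : L (Pi.single μ 1) = 0 := by
      simp [hL, Pi.single_apply, hνμ.symm]
    rw [pd, pd, hcomp μ (Pi.single ν 1), hcomp ν (Pi.single μ 1), hLν, hLμ] at hc
    simpa using hc
  intro u v
  funext μ
  exact is_const_of_fderiv_eq_zero (hGμd μ)
    (fun x => ContinuousLinearMap.ext fun w => key x w μ) u v

end
end

section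
/- If G : ℝ^N → ℝ⁵ (components G^μ, μ = 0,…,4) is smooth and for every smooth map Φ : ℝ⁵ → ℝ^N the divergence of the composite vanishes identically, i.e. Σ_{μ=0}^{4} ∂_μ(G^μ ∘ Φ)(x) = 0 for all x ∈ ℝ⁵, then G is a constant map. -/
noncomputable section

/-- if `G : ℝᴺ → ℝ⁵` is smooth and for every smooth `Φ : ℝ⁵ → ℝᴺ` the
divergence of `G ∘ Φ` vanishes identically, then `G` is constant. -/
theorem divergence_free_for_all_fields_implies_constant
    (N : ℕ) (hN : 1 ≤ N) (G : (Fin N → ℝ) → Fin 5 → ℝ)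
    (hG : ContDiff ℝ (⊤ : ℕ∞) G)
    (h : ∀ Φ : (Fin 5 → ℝ) → Fin N → ℝ, ContDiff ℝ (⊤ : ℕ∞) Φ →
      ∀ x : Fin 5 → ℝ, ∑ μ : Fin 5, pd μ (fun y => G (Φ y) μ) x = 0) :
    ∀ u v : Fin N → ℝ, G u = G v := by
  intro u v
  funext μ
  set L : ℝ → Fin N → ℝ := fun t i => u i + t * (v i - u i) with hLdef
  have hL : ContDiff ℝ (⊤ : ℕ∞) L := by
    apply contDiff_pi.mpr
    intro i
    fun_prop
  set f : Fin 5 → ℝ → ℝ := fun ν t => G (L t) ν with hfdef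
  have hf : ∀ ν, ContDiff ℝ (⊤ : ℕ∞) (f ν) := fun ν =>
    (contDiff_pi.mp (hG.comp hL)) ν
  have key : ∀ t : ℝ, deriv (f μ) t = 0 := by
    intro t
    have hΦ : ContDiff ℝ (⊤ : ℕ∞) (fun x : Fin 5 → ℝ => L (x μ)) :=
      hL.comp (contDiff_apply ℝ ℝ μ)
    have h0 := h _ hΦ (fun _ => t)
    have hterm : ∀ ν : Fin 5, pd ν (fun y : Fin 5 → ℝ => G (L (y μ)) ν) (fun _ => t)
        = deriv (f ν) t * ((Pi.single ν 1 : Fin 5 → ℝ) μ) := by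
      intro ν
      have hd : HasDerivAt (f ν) (deriv (f ν) t) t :=
        ((hf ν).differentiable (by simp) t).hasDerivAt
      have hp : HasFDerivAt (fun y : Fin 5 → ℝ => y μ)
          (ContinuousLinearMap.proj (R := ℝ) (φ := fun _ : Fin 5 => ℝ) μ) (fun _ => t) :=
        (ContinuousLinearMap.proj (R := ℝ) (φ := fun _ : Fin 5 => ℝ) μ).hasFDerivAt
      have hc : HasFDerivAt ((f ν) ∘ fun y : Fin 5 → ℝ => y μ)
          ((deriv (f ν) t) • ContinuousLinearMap.proj (R := ℝ) (φ := fun _ : Fin 5 => ℝ) μ) (fun _ => t) :=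
        hd.comp_hasFDerivAt _ hp
      have heq : (fun y : Fin 5 → ℝ => G (L (y μ)) ν) = (f ν) ∘ fun y => y μ := rfl
      rw [pd, heq, hc.fderiv]
      simp [Pi.single_apply, mul_comm]
    rw [Finset.sum_congr rfl (fun ν _ => hterm ν)] at h0
    simpa [Pi.single_apply] using h0
  have hconst := is_const_of_deriv_eq_zero ((hf μ).differentiable (by simp)) key 1 0
  have h0 : f μ 0 = G u μ := by simp [hfdef, hLdef]
  have h1 : f μ 1 = G v μ := by
    have : L 1 = v := by funext i; simp [hLdef]
    simp [hfdef, this]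
  rw [← h0, ← h1, hconst]

end
end
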